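/- arXiv:2009.05424 — 6 statements merged into one kernel-verified Lean document; each statement's English description precedes it below -/
import Mathlib

section
/- Let p be a prime number. The localization of the ring ℤ[X]/(X^p − 1) away from p is isomorphic, as a commutative ring, to the product ring ℤ[1/p] × (ℤ[X]/(Φ_p))[1/p], where the first factor is the localization of ℤ away from p and the second is the localization of ℤ[X]/(Φ_p) away from p. -/
/-!
Since `Φ_p(1) = p`, the prime `p` lies in the ideal `(X - 1) + (Φ_p)`. Once `p` is inverted, the
ideals `(X - 1)` and `(Φ_p)` are therefore coprime, and the Chinese remainder theorem splits the
localization of `ℤ[X]/((X - 1)Φ_p)` into the localizations of `ℤ[X]/(X - 1) ≅ ℤ` and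
`ℤ[X]/(Φ_p)`; localization commutes with taking quotients.
-/

open Polynomial

namespace Localization

variable {A : Type*} [CommRing A]

noncomputable def awayQuotientEquiv (I : Ideal A) (r : A) :
    Away (Ideal.Quotient.mk I r) ≃+* Away r ⧸ I.map (algebraMap A (Away r)) := by
  have : IsLocalization.Away (Ideal.Quotient.mk I r)
      (Away r ⧸ I.map (algebraMap A (Away r))) := by
    have h := (inferInstance : IsLocalization
      (Algebra.algebraMapSubmonoid (A ⧸ I) (Submonoid.powers r))
      (Away r ⧸ I.map (algebraMap A (Away r))))
    rwa [Algebra.algebraMapSubmonoid, Submonoid.map_powers] at h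
  exact (IsLocalization.algEquiv (Submonoid.powers (Ideal.Quotient.mk I r)) _ _).toRingEquiv

noncomputable def awayEquivOfRingEquiv {A' : Type*} [CommRing A'] (e : A ≃+* A')
    {r : A} {s : A'} (h : e r = s) : Away r ≃+* Away s :=
  IsLocalization.ringEquivOfRingEquiv (T := Submonoid.powers s) _ _ e
    (by rw [Submonoid.map_powers, ← h]; rfl)

noncomputable def awayQuotientMulEquivProd {I J : Ideal A} {r : A} (h : r ∈ I ⊔ J) :
    Away (Ideal.Quotient.mk (I * J) r) ≃+*
      Away (Ideal.Quotient.mk I r) × Away (Ideal.Quotient.mk J r) :=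
  have coprime : IsCoprime (I.map (algebraMap A (Away r))) (J.map (algebraMap A (Away r))) := by
    rw [Ideal.isCoprime_iff_sup_eq, ← Ideal.map_sup]
    exact Ideal.eq_top_of_isUnit_mem _ (Ideal.mem_map_of_mem _ h)
      (IsLocalization.Away.algebraMap_isUnit r)
  (awayQuotientEquiv (I * J) r).trans <|
    (Ideal.quotEquivOfEq (Ideal.map_mul _ _ _)).trans <|
      (Ideal.quotientMulEquivQuotientProd _ _ coprime).trans <|
        (awayQuotientEquiv I r).symm.prodCongr (awayQuotientEquiv J r).symm

end Localization

theorem Polynomial.C_eval_mem_span_X_sub_C_sup_span {R : Type*} [CommRing R] (f : R[X]) (a : R) :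
    C (f.eval a) ∈ Ideal.span {X - C a} ⊔ Ideal.span {f} := by
  obtain ⟨q, hq⟩ := X_sub_C_dvd_sub_C_eval (p := f) (a := a)
  rw [show C (f.eval a) = f - (X - C a) * q by rw [← hq]; ring]
  exact sub_mem (Ideal.mem_sup_right (Ideal.mem_span_singleton_self f))
    (Ideal.mem_sup_left (Ideal.mul_mem_right q _ (Ideal.mem_span_singleton_self _)))

/-- For a prime `p`, the localization of `ℤ[X]/(X^p − 1)` away from `p` is
isomorphic as a commutative ring to `ℤ[1/p] × (ℤ[X]/(Φ_p))[1/p]`. -/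
theorem spectrum_decomposition_ring (p : ℕ) (hp : p.Prime) :
    Nonempty
      (Localization.Away ((p : ℕ) : Polynomial ℤ ⧸ Ideal.span {(X : Polynomial ℤ) ^ p - 1}) ≃+*
        Localization.Away (p : ℤ) ×
          Localization.Away
            ((p : ℕ) : Polynomial ℤ ⧸ Ideal.span {cyclotomic p ℤ})) := by
  have := Fact.mk hp
  have hfactor : Ideal.span {(X : ℤ[X]) ^ p - 1} =
      Ideal.span {X - C 1} * Ideal.span {cyclotomic p ℤ} := by
    rw [Ideal.span_singleton_mul_span_singleton, map_one, mul_comm,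
      cyclotomic_prime_mul_X_sub_one]
  have hp_mem : (p : ℤ[X]) ∈ Ideal.span {X - C 1} ⊔ Ideal.span {cyclotomic p ℤ} := by
    simpa [eval_one_cyclotomic_prime] using C_eval_mem_span_X_sub_C_sup_span (cyclotomic p ℤ) 1
  have heval : quotientSpanXSubCAlgEquiv (1 : ℤ) (Ideal.Quotient.mk _ p) = p := by simp
  rw [← map_natCast (Ideal.Quotient.mk (Ideal.span {(X : ℤ[X]) ^ p - 1})) p,
    ← map_natCast (Ideal.Quotient.mk (Ideal.span {cyclotomic p ℤ})) p, hfactor]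
  exact ⟨(Localization.awayQuotientMulEquivProd hp_mem).trans
    ((Localization.awayEquivOfRingEquiv (quotientSpanXSubCAlgEquiv 1).toRingEquiv heval).prodCongr
      (RingEquiv.refl _))⟩
end

section
/- Let p be a prime number. The images in ℤ[X]/(X^p − 1) of the ideals (X − 1) and (Φ_p) of ℤ[X] are prime ideals, and the set of minimal prime ideals of the ring ℤ[X]/(X^p − 1) is exactly { image of (X − 1), image of (Φ_p) }. In particular, the prime spectrum of ℤ[X]/(X^p − 1) has exactly two irreducible components. -/
/-!
Since `X ^ p - 1 = (X - 1) * Φ_p` is a product of two non-associated primes of `ℤ[X]`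
(`Φ_p` is irreducible, and `X - 1` does not divide it because `Φ_p(1) = p ≠ 0`), a prime of
`ℤ[X]` contains `X ^ p - 1` exactly when it contains one of the two factors. Hence the minimal
primes over `(X ^ p - 1)` are `(X - 1)` and `(Φ_p)`; they correspond to the minimal primes of
the quotient, and those to the irreducible components of its spectrum.
-/

open Polynomial

namespace Ideal

section CommSemiring

variable {R : Type*} [CommSemiring R] {f g : R}

theorem span_singleton_mem_minimalPrimes_span_mul (hf : Prime f) (hfg : ¬ f ∣ g) :
    span {f} ∈ (span {f * g}).minimalPrimes := by
  refine ⟨⟨(span_singleton_prime hf.ne_zero).mpr hf,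
    span_singleton_le_span_singleton.mpr (dvd_mul_right f g)⟩, ?_⟩
  rintro K ⟨hK, hKle⟩ hKf
  rcases hK.mem_or_mem (hKle (mem_span_singleton_self (f * g))) with hfK | hgK
  · exact (span_singleton_le_iff_mem K).mpr hfK
  · exact absurd (mem_span_singleton.mp (hKf hgK)) hfg

theorem eq_span_of_mem_minimalPrimes_span_mul (hf : Prime f) (hg : Prime g) {Q : Ideal R}
    (hQ : Q ∈ (span {f * g}).minimalPrimes) : Q = span {f} ∨ Q = span {g} := by
  have hQmin : Minimal (fun J : Ideal R => J.IsPrime ∧ span {f * g} ≤ J) Q := hQ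
  have hspan (a : R) (ha : Prime a) (hdvd : a ∣ f * g) (haQ : a ∈ Q) : Q = span {a} :=
    (hQmin.eq_of_le ⟨(span_singleton_prime ha.ne_zero).mpr ha,
      span_singleton_le_span_singleton.mpr hdvd⟩ ((span_singleton_le_iff_mem Q).mpr haQ)).symm
  rcases hQmin.1.1.mem_or_mem (hQmin.1.2 (mem_span_singleton_self (f * g))) with hfQ | hgQ
  · exact .inl (hspan f hf (dvd_mul_right f g) hfQ)
  · exact .inr (hspan g hg (dvd_mul_left g f) hgQ)

end CommSemiring

theorem minimalPrimes_span_mul {R : Type*} [CommRing R] [IsDomain R] {f g : R} (hf : Prime f)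
    (hg : Prime g) (hfg : ¬ Associated f g) :
    (span {f * g}).minimalPrimes = {span {f}, span {g}} := by
  have hf_not_dvd : ¬ f ∣ g := mt (hf.associated_of_dvd hg) hfg
  have hg_not_dvd : ¬ g ∣ f := fun h => hfg (hg.associated_of_dvd hf h).symm
  ext Q
  refine ⟨eq_span_of_mem_minimalPrimes_span_mul hf hg, ?_⟩
  rintro (rfl | rfl)
  · exact span_singleton_mem_minimalPrimes_span_mul hf hf_not_dvd
  · rw [mul_comm]
    exact span_singleton_mem_minimalPrimes_span_mul hg hg_not_dvd

variable {R : Type*} [CommRing R] (I : Ideal R)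

theorem minimalPrimes_quotient :
    minimalPrimes (R ⧸ I) = map (Quotient.mk I) '' I.minimalPrimes := by
  rw [minimalPrimes_eq_comap, ← Set.image_comp, Set.image_congr, Set.image_id]
  exact fun J _ => map_comap_of_surjective _ Quotient.mk_surjective J

theorem ncard_minimalPrimes_quotient : (minimalPrimes (R ⧸ I)).ncard = I.minimalPrimes.ncard := by
  rw [minimalPrimes_eq_comap, Set.ncard_image_of_injective _
    (comap_injective_of_surjective _ Quotient.mk_surjective)]

end Ideal

theorem PrimeSpectrum.ncard_irreducibleComponents (R : Type*) [CommRing R] :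
    (irreducibleComponents (PrimeSpectrum R)).ncard = (minimalPrimes R).ncard :=
  (Set.ncard_congr' (minimalPrimes.equivIrreducibleComponents R).toEquiv).symm

theorem Polynomial.X_sub_one_not_dvd_cyclotomic_prime {R : Type*} [CommRing R] [CharZero R]
    {p : ℕ} (hp : p.Prime) : ¬ (X - 1 : R[X]) ∣ cyclotomic p R := by
  have : Fact p.Prime := ⟨hp⟩
  rw [← C_1, dvd_iff_isRoot, IsRoot, eval_one_cyclotomic_prime]
  exact_mod_cast hp.ne_zero

/-- For a prime `p`, the images in `ℤ[X]/(X^p − 1)` of the ideals `(X − 1)`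
and `(Φ_p)` are prime, the set of minimal primes of `ℤ[X]/(X^p − 1)` is exactly
`{image of (X − 1), image of (Φ_p)}`, and the prime spectrum has exactly two
irreducible components. -/
theorem minimalPrimes_quotient_X_pow_p_sub_one (p : ℕ) (hp : p.Prime) :
    (Ideal.map (Ideal.Quotient.mk (Ideal.span {(X : Polynomial ℤ) ^ p - 1}))
        (Ideal.span {(X : Polynomial ℤ) - 1})).IsPrime ∧
    (Ideal.map (Ideal.Quotient.mk (Ideal.span {(X : Polynomial ℤ) ^ p - 1}))
        (Ideal.span {cyclotomic p ℤ})).IsPrime ∧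
    minimalPrimes (Polynomial ℤ ⧸ Ideal.span {(X : Polynomial ℤ) ^ p - 1}) =
      {Ideal.map (Ideal.Quotient.mk (Ideal.span {(X : Polynomial ℤ) ^ p - 1}))
          (Ideal.span {(X : Polynomial ℤ) - 1}),
        Ideal.map (Ideal.Quotient.mk (Ideal.span {(X : Polynomial ℤ) ^ p - 1}))
          (Ideal.span {cyclotomic p ℤ})} ∧
    (irreducibleComponents
        (PrimeSpectrum (Polynomial ℤ ⧸ Ideal.span {(X : Polynomial ℤ) ^ p - 1}))).ncard = 2 := by
  have : Fact p.Prime := ⟨hp⟩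
  have hfactor : (X - 1) * cyclotomic p ℤ = X ^ p - 1 :=
    (mul_comm _ _).trans (cyclotomic_prime_mul_X_sub_one ℤ p)
  have hX : Prime (X - 1 : ℤ[X]) := by simpa using prime_X_sub_C (1 : ℤ)
  have hΦ : Prime (cyclotomic p ℤ) := (cyclotomic.irreducible hp.pos).prime
  have hnot_assoc : ¬ Associated (X - 1 : ℤ[X]) (cyclotomic p ℤ) :=
    fun h => X_sub_one_not_dvd_cyclotomic_prime hp h.dvd
  have hmin := Ideal.minimalPrimes_span_mul hX hΦ hnot_assoc
  rw [hfactor] at hmin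
  have hquot : minimalPrimes (ℤ[X] ⧸ Ideal.span {X ^ p - 1}) = {Ideal.map (Ideal.Quotient.mk _)
      (Ideal.span {X - 1}), Ideal.map (Ideal.Quotient.mk _) (Ideal.span {cyclotomic p ℤ})} := by
    rw [Ideal.minimalPrimes_quotient, hmin, Set.image_pair]
  have hprime {J : Ideal (ℤ[X] ⧸ Ideal.span {(X : ℤ[X]) ^ p - 1})} (hJ : J ∈ minimalPrimes _) :
      J.IsPrime := hJ.1.1
  refine ⟨hprime (hquot ▸ .inl rfl), hprime (hquot ▸ .inr rfl), hquot, ?_⟩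
  rw [PrimeSpectrum.ncard_irreducibleComponents, Ideal.ncard_minimalPrimes_quotient, hmin,
    Set.ncard_pair (mt Ideal.span_singleton_eq_span_singleton.mp hnot_assoc)]
end

section
/- Let p be a prime number, and let ψ : PrimeSpectrum ℤ → PrimeSpectrum(ℤ[X]/(X^p − 1)) and φ : PrimeSpectrum(ℤ[X]/(Φ_p)) → PrimeSpectrum(ℤ[X]/(X^p − 1)) be the maps induced by the quotient homomorphisms X ↦ 1 and the canonical surjection, respectively. Then the intersection of the images of ψ and φ consists of exactly one point, namely the maximal ideal of ℤ[X]/(X^p − 1) that is the image of the ideal (p, X − 1) ⊂ ℤ[X]. -/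
/-!
Both maps are closed immersions, so their images meet in the zero locus of
`ker f ⊔ ker g`, the image of `(X - 1) + (Φ_p)` in `ℤ[X]/(X^p - 1)`. Since `Φ_p(1) = p`, the ideal
`(X - 1) + (Φ_p)` is `(p, X - 1)`, the preimage of the maximal ideal `(p) ⊂ ℤ` under evaluation
at `1`; its image is the preimage of `(p)` under `f`, hence maximal.
-/

open Polynomial

section

variable {R S T : Type*} [CommRing R] [CommRing S] [CommRing T]

theorem PrimeSpectrum.range_comap_inter_range_comap_of_surjective {f : R →+* S} {g : R →+* T}
    (hf : Function.Surjective f) (hg : Function.Surjective g) :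
    Set.range (comap f) ∩ Set.range (comap g) = zeroLocus ↑(RingHom.ker f ⊔ RingHom.ker g) := by
  rw [range_comap_of_surjective _ f hf, range_comap_of_surjective _ g hg]
  exact (zeroLocus_sup (RingHom.ker f) (RingHom.ker g)).symm

theorem RingHom.ker_eq_map_ker_comp {π : R →+* S} (hπ : Function.Surjective π) (f : S →+* T) :
    RingHom.ker f = (RingHom.ker (f.comp π)).map π := by
  rw [← RingHom.comap_ker, Ideal.map_comap_of_surjective π hπ]

theorem Polynomial.comap_evalRingHom_span_eval (a : R) (q : R[X]) :
    (Ideal.span {q.eval a}).comap (evalRingHom a) = Ideal.span {q} ⊔ Ideal.span {X - C a} := by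
  have := Ideal.comap_map_of_surjective (evalRingHom a) (eval_surjective a) (Ideal.span {q})
  rwa [Ideal.map_span, Set.image_singleton, ← RingHom.ker_eq_comap_bot, ker_evalRingHom,
    coe_evalRingHom] at this

end

/-- For a prime `p`, the images of the maps `ψ : Spec ℤ → Spec ℤ[X]/(X^p − 1)`
and `φ : Spec ℤ[X]/(Φ_p) → Spec ℤ[X]/(X^p − 1)` intersect in exactly one point, namely the
maximal ideal which is the image of `(p, X − 1) ⊂ ℤ[X]`. -/
theorem comap_images_intersection (p : ℕ) (hp : p.Prime)
    (f : (Polynomial ℤ ⧸ Ideal.span {(X : Polynomial ℤ) ^ p - 1}) →+* ℤ)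
    (hf : f.comp (Ideal.Quotient.mk (Ideal.span {(X : Polynomial ℤ) ^ p - 1})) =
      Polynomial.evalRingHom (1 : ℤ))
    (g : (Polynomial ℤ ⧸ Ideal.span {(X : Polynomial ℤ) ^ p - 1}) →+*
      Polynomial ℤ ⧸ Ideal.span {cyclotomic p ℤ})
    (hg : g.comp (Ideal.Quotient.mk (Ideal.span {(X : Polynomial ℤ) ^ p - 1})) =
      Ideal.Quotient.mk (Ideal.span {cyclotomic p ℤ})) :
    (Ideal.map (Ideal.Quotient.mk (Ideal.span {(X : Polynomial ℤ) ^ p - 1}))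
        (Ideal.span {(p : Polynomial ℤ), X - 1})).IsMaximal ∧
    Set.range (PrimeSpectrum.comap f) ∩ Set.range (PrimeSpectrum.comap g) =
      {P : PrimeSpectrum (Polynomial ℤ ⧸ Ideal.span {(X : Polynomial ℤ) ^ p - 1}) |
        P.asIdeal =
          Ideal.map (Ideal.Quotient.mk (Ideal.span {(X : Polynomial ℤ) ^ p - 1}))
            (Ideal.span {(p : Polynomial ℤ), X - 1})} := by
  have : Fact p.Prime := ⟨hp⟩
  set mk := Ideal.Quotient.mk (Ideal.span {(X : ℤ[X]) ^ p - 1})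
  have hmk : Function.Surjective mk := Ideal.Quotient.mk_surjective
  have hf_surj : Function.Surjective f := Function.Surjective.of_comp (g := mk) <| by
    rw [← RingHom.coe_comp, hf, coe_evalRingHom]; exact eval_surjective 1
  have hg_surj : Function.Surjective g := Function.Surjective.of_comp (g := mk) <| by
    rw [← RingHom.coe_comp, hg]; exact Ideal.Quotient.mk_surjective
  have hK : Ideal.span {(p : ℤ[X]), X - 1} = (Ideal.span {(p : ℤ)}).comap (evalRingHom 1) := by
    rw [← C_1, ← map_natCast C, Ideal.span_insert, ← comap_evalRingHom_span_eval, eval_C]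
  have hM : (Ideal.span {(p : ℤ[X]), X - 1}).map mk = (Ideal.span {(p : ℤ)}).comap f := by
    rw [hK, ← hf, ← Ideal.comap_comap, Ideal.map_comap_of_surjective _ hmk]
  have hker : RingHom.ker f ⊔ RingHom.ker g = (Ideal.span {(p : ℤ)}).comap f := by
    rw [RingHom.ker_eq_map_ker_comp hmk f, RingHom.ker_eq_map_ker_comp hmk g, hf, hg,
      ker_evalRingHom, Ideal.mk_ker, ← Ideal.map_sup, sup_comm, ← comap_evalRingHom_span_eval,
      eval_one_cyclotomic_prime, ← hK, hM]
  have hmax : ((Ideal.span {(p : ℤ)}).comap f).IsMaximal :=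
    Ideal.comap_isMaximal_of_surjective f hf_surj
  refine ⟨hM ▸ hmax, ?_⟩
  rw [PrimeSpectrum.range_comap_inter_range_comap_of_surjective hf_surj hg_surj, hker, hM,
    PrimeSpectrum.zeroLocus_eq_singleton]
  ext P
  simp [PrimeSpectrum.ext_iff]
end

section
/- Let p be a prime number. There is a bijection of sets PrimeSpectrum(ℤ[X]/(X^p − 1)) ≃ PrimeSpectrum ℤ ⊕ PrimeSpectrum((ℤ[X]/(Φ_p))[1/p]), where (ℤ[X]/(Φ_p))[1/p] denotes the localization of ℤ[X]/(Φ_p) away from p; on the first summand the bijection is induced by the quotient map X ↦ 1 and on the second by the composite of the localization map with the canonical surjection. -/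
/-!
Write `t = X - 1` in `R = ℤ[X]/(X^p - 1)`. The primes of `R` containing `t` are those of
`R/(t) ≅ ℤ`. A prime `P` not containing `t` contains `Φ_p`, because `Φ_p t = X^p - 1 = 0`, and
does not contain `p`, because `t^p ≡ X^p - 1 = 0` modulo `p`; conversely `p ∈ (t, Φ_p)` as
`Φ_p(1) = p`. Hence `D(t) = V(Φ_p) ∩ D(p)`, which is the spectrum of `(ℤ[X]/(Φ_p))[1/p]`.
-/

open Polynomial Function PrimeSpectrum RingHom

theorem Function.Injective.sumElim_bijective {α β γ : Type*} {i : α → γ} {j : β → γ}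
    (hi : Injective i) (hj : Injective j) (hij : IsCompl (Set.range i) (Set.range j)) :
    Bijective (Sum.elim i j) := by
  refine ⟨hi.sumElim hj fun a b hab => hij.disjoint.ne_of_mem ⟨a, rfl⟩ ⟨b, rfl⟩ hab, ?_⟩
  rw [← Set.range_eq_univ, Set.Sum.elim_range]
  exact hij.sup_eq_top

theorem RingHom.ker_eq_map_ker_comp_s10 {A R S : Type*} [CommRing A] [CommRing R] [CommRing S]
    {π : A →+* R} (hπ : Surjective π) (h : R →+* S) : ker h = (ker (h.comp π)).map π := by
  rw [← comap_ker, Ideal.map_comap_of_surjective π hπ]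

theorem natCast_dvd_sub_one_pow_of_pow_eq_one {R : Type*} [CommRing R] {p : ℕ} (hp : p.Prime)
    {x : R} (hx : x ^ p = 1) : (p : R) ∣ (x - 1) ^ p := by
  obtain ⟨r, hr⟩ := exists_add_pow_prime_eq hp (x - 1) 1
  rw [sub_add_cancel, hx, one_pow] at hr
  exact ⟨-((x - 1) * r), by linear_combination -hr⟩

theorem Polynomial.natCast_mem_span_X_sub_one_cyclotomic {p : ℕ} [Fact p.Prime] :
    (p : ℤ[X]) ∈ Ideal.span {X - 1, cyclotomic p ℤ} := by
  have : X - C 1 ∣ cyclotomic p ℤ - C ((cyclotomic p ℤ).eval 1) := X_sub_C_dvd_sub_C_eval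
  rw [eval_one_cyclotomic_prime, map_one, map_natCast] at this
  obtain ⟨q, hq⟩ := this
  rw [Ideal.mem_span_pair]
  exact ⟨-q, 1, by linear_combination hq⟩

namespace PrimeSpectrum

variable {R B : Type*} [CommRing R] [CommRing B]

theorem basicOpen_eq_zeroLocus_inter_basicOpen {t a c : R} {n : ℕ} (hat : a * t = 0)
    (hct : c ∣ t ^ n) (hc : c ∈ Ideal.span {t, a}) :
    (basicOpen t : Set (PrimeSpectrum R)) = zeroLocus {a} ∩ basicOpen c := by
  ext P
  simp only [SetLike.mem_coe, mem_basicOpen, Set.mem_inter_iff, mem_zeroLocus,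
    Set.singleton_subset_iff]
  constructor
  · intro ht
    refine ⟨(P.isPrime.mem_or_mem (hat ▸ P.asIdeal.zero_mem)).resolve_right ht, fun hcP => ?_⟩
    exact ht (P.isPrime.mem_of_pow_mem n (Ideal.mem_of_dvd _ hct hcP))
  · rintro ⟨ha, hcP⟩ ht
    exact hcP <| Ideal.span_le.mpr
      (Set.insert_subset_iff.mpr ⟨ht, Set.singleton_subset_iff.mpr ha⟩) hc

theorem comap_algebraMap_away_comp_injective {g : R →+* B} (hg : Surjective g) (s : B) :
    Injective (comap ((algebraMap B (Localization.Away s)).comp g)) := by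
  rw [comap_comp]
  exact (comap_injective_of_surjective g hg).comp
    (localization_comap_injective _ (Submonoid.powers s))

theorem range_comap_algebraMap_away_comp {g : R →+* B} (hg : Surjective g) {c : R} {s : B}
    (hcs : g c = s) :
    Set.range (comap ((algebraMap B (Localization.Away s)).comp g)) =
      zeroLocus (ker g) ∩ basicOpen c := by
  rw [comap_comp, Set.range_comp, localization_away_comap_range _ s,
    ← range_comap_of_surjective _ g hg]
  ext P
  constructor
  · rintro ⟨Q, hQ, rfl⟩
    exact ⟨⟨Q, rfl⟩, by simpa [← hcs] using hQ⟩
  · rintro ⟨⟨Q, rfl⟩, hP⟩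
    exact ⟨Q, by simpa [← hcs] using hP, rfl⟩

end PrimeSpectrum

theorem basicOpen_mk_X_sub_one_eq {p : ℕ} [hp : Fact p.Prime] :
    (basicOpen (Ideal.Quotient.mk (Ideal.span {(X : ℤ[X]) ^ p - 1}) (X - 1)) :
        Set (PrimeSpectrum (ℤ[X] ⧸ Ideal.span {(X : ℤ[X]) ^ p - 1}))) =
      zeroLocus {Ideal.Quotient.mk (Ideal.span {(X : ℤ[X]) ^ p - 1}) (cyclotomic p ℤ)} ∩
        basicOpen ((p : ℕ) : ℤ[X] ⧸ Ideal.span {(X : ℤ[X]) ^ p - 1}) := by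
  set π := Ideal.Quotient.mk (Ideal.span {(X : ℤ[X]) ^ p - 1})
  have hπ : π (X ^ p - 1) = 0 := Ideal.Quotient.eq_zero_iff_mem.mpr (Ideal.subset_span rfl)
  apply basicOpen_eq_zeroLocus_inter_basicOpen (n := p)
  · rw [← map_mul, cyclotomic_prime_mul_X_sub_one, hπ]
  · rw [map_sub, map_one]
    exact natCast_dvd_sub_one_pow_of_pow_eq_one hp.out (by simpa [sub_eq_zero] using hπ)
  · simpa [Ideal.map_span, Set.image_pair] using
      Ideal.mem_map_of_mem π (natCast_mem_span_X_sub_one_cyclotomic (p := p))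

/-- For a prime `p`, there is a bijection of sets
`Spec(ℤ[X]/(X^p − 1)) ≃ Spec ℤ ⊔ Spec((ℤ[X]/(Φ_p))[1/p])`, induced on the first summand
by the quotient map `X ↦ 1` and on the second by the composite of the localization map
with the canonical surjection. -/
theorem primeSpectrum_decomposition (p : ℕ) (hp : p.Prime)
    (f : (Polynomial ℤ ⧸ Ideal.span {(X : Polynomial ℤ) ^ p - 1}) →+* ℤ)
    (hf : f.comp (Ideal.Quotient.mk (Ideal.span {(X : Polynomial ℤ) ^ p - 1})) =
      Polynomial.evalRingHom (1 : ℤ))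
    (g : (Polynomial ℤ ⧸ Ideal.span {(X : Polynomial ℤ) ^ p - 1}) →+*
      Polynomial ℤ ⧸ Ideal.span {cyclotomic p ℤ})
    (hg : g.comp (Ideal.Quotient.mk (Ideal.span {(X : Polynomial ℤ) ^ p - 1})) =
      Ideal.Quotient.mk (Ideal.span {cyclotomic p ℤ})) :
    ∃ e : PrimeSpectrum (Polynomial ℤ ⧸ Ideal.span {(X : Polynomial ℤ) ^ p - 1}) ≃
        (PrimeSpectrum ℤ ⊕
          PrimeSpectrum
            (Localization.Away ((p : ℕ) : Polynomial ℤ ⧸ Ideal.span {cyclotomic p ℤ}))),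
      (∀ Q : PrimeSpectrum ℤ, e.symm (Sum.inl Q) = PrimeSpectrum.comap f Q) ∧
      (∀ Q : PrimeSpectrum
          (Localization.Away ((p : ℕ) : Polynomial ℤ ⧸ Ideal.span {cyclotomic p ℤ})),
        e.symm (Sum.inr Q) =
          PrimeSpectrum.comap
            ((algebraMap (Polynomial ℤ ⧸ Ideal.span {cyclotomic p ℤ})
              (Localization.Away
                ((p : ℕ) : Polynomial ℤ ⧸ Ideal.span {cyclotomic p ℤ}))).comp g) Q) := by
  have := Fact.mk hp
  set π := Ideal.Quotient.mk (Ideal.span {(X : ℤ[X]) ^ p - 1})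
  have hf_surj : Surjective f := .of_comp (g := π) <| by
    rw [← RingHom.coe_comp, hf]
    exact fun z => ⟨C z, eval_C⟩
  have hg_surj : Surjective g := .of_comp (g := π) <| by
    rw [← RingHom.coe_comp, hg]
    exact Ideal.Quotient.mk_surjective
  have hker_f : ker f = Ideal.span {π (X - 1)} := by
    rw [ker_eq_map_ker_comp_s10 Ideal.Quotient.mk_surjective, hf, Polynomial.ker_evalRingHom,
      Ideal.map_span, Set.image_singleton, map_one]
  have hker_g : ker g = Ideal.span {π (cyclotomic p ℤ)} := by
    rw [ker_eq_map_ker_comp_s10 Ideal.Quotient.mk_surjective, hg, Ideal.mk_ker, Ideal.map_span,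
      Set.image_singleton]
  have hbij := (comap_injective_of_surjective f hf_surj).sumElim_bijective
    (comap_algebraMap_away_comp_injective hg_surj _) <| by
      rw [range_comap_of_surjective _ f hf_surj,
        range_comap_algebraMap_away_comp hg_surj (map_natCast g p), hker_f, hker_g,
        zeroLocus_span, zeroLocus_span, ← basicOpen_mk_X_sub_one_eq, basicOpen_eq_zeroLocus_compl]
      exact isCompl_compl
  exact ⟨(Equiv.ofBijective _ hbij).symm, fun Q => rfl, fun Q => rfl⟩
end

section
/- Let p be a prime number. The ring ℤ[X]/(Φ_p), where Φ_p is the p-th cyclotomic polynomial, is a Dedekind domain. -/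
/-!
The primitive `n`-th root of unity `ζ` generates the ring of integers of `ℚ(ζ)` over `ℤ` and
has minimal polynomial `Φ_n`, so `ℤ[X]/(Φ_n) ≅ ℤ[ζ] = 𝓞 ℚ(ζ)`. Rings of integers of number
fields are Dedekind domains, and being a Dedekind domain is invariant under ring isomorphisms.
-/

open Polynomial NumberField

theorem IsDedekindDomain.of_ringEquiv {A B : Type*} [CommRing A] [CommRing B]
    [IsDedekindDomain A] (e : A ≃+* B) : IsDedekindDomain B :=
  have : IsDomain B := e.symm.toMulEquiv.isDomain
  have : IsNoetherianRing B := isNoetherianRing_of_ringEquiv A e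
  have : Ring.DimensionLEOne B := .of_ringEquiv e.symm
  have : IsIntegrallyClosed B := .of_equiv e
  { }

namespace IsPrimitiveRoot

variable {n : ℕ} [NeZero n] {K : Type*} [Field K] [CharZero K] {ζ : K}

theorem minpoly_toInteger_eq_cyclotomic (hζ : IsPrimitiveRoot ζ n) :
    minpoly ℤ hζ.toInteger = cyclotomic n ℤ :=
  (RingOfIntegers.minpoly_coe _).symm.trans (cyclotomic_eq_minpoly hζ (NeZero.pos n)).symm

variable [IsCyclotomicExtension {n} ℚ K]

noncomputable def adjoinRootCyclotomicEquivRingOfIntegers (hζ : IsPrimitiveRoot ζ n) :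
    AdjoinRoot (cyclotomic n ℤ) ≃ₐ[ℤ] 𝓞 K :=
  AdjoinRoot.equiv' _ hζ.integralPowerBasis
    (by rw [integralPowerBasis_gen, hζ.minpoly_toInteger_eq_cyclotomic, AdjoinRoot.aeval_eq,
      AdjoinRoot.mk_self])
    (by rw [integralPowerBasis_gen, ← hζ.minpoly_toInteger_eq_cyclotomic, minpoly.aeval])

end IsPrimitiveRoot

theorem isDedekindDomain_adjoinRoot_cyclotomic (n : ℕ) [NeZero n] :
    IsDedekindDomain (AdjoinRoot (cyclotomic n ℤ)) :=
  -- The ascription selects the canonical `ℚ`-algebra structure, which instance search needs.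
  have : IsCyclotomicExtension {n} ℚ (CyclotomicField n ℚ) :=
    CyclotomicField.isCyclotomicExtension n ℚ
  .of_ringEquiv (IsCyclotomicExtension.zeta_spec n ℚ (CyclotomicField n ℚ)
    |>.adjoinRootCyclotomicEquivRingOfIntegers).symm.toRingEquiv

/-- For a prime `p`, the ring `ℤ[X]/(Φ_p)` is a Dedekind domain. -/
theorem quotient_cyclotomic_isDedekindDomain (p : ℕ) (hp : p.Prime) :
    IsDedekindDomain (Polynomial ℤ ⧸ Ideal.span {cyclotomic p ℤ}) :=
  have : NeZero p := ⟨hp.ne_zero⟩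
  isDedekindDomain_adjoinRoot_cyclotomic p
end

section
/- Let R be a commutative ring and consider the Laurent polynomial ring R[T, T⁻¹] with its natural ℤ-grading by T-degree (i.e. the grading of the monoid algebra R[ℤ]). Then extension of ideals along the inclusion R → R[T, T⁻¹] gives a bijection between the prime ideals of R and the homogeneous prime ideals of R[T, T⁻¹]; the inverse is contraction (intersection with the degree-zero part R). In particular, every homogeneous prime ideal of R[T, T⁻¹] is generated by its degree-zero part. -/
/-!
Extending an ideal `I` of `R` to `R[G]` gives the kernel of the coefficientwise reduction
`R[G] → (R ⧸ I)[G]`, i.e. the elements all of whose coefficients lie in `I`. Hence extension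
followed by contraction is the identity, and the extension of a prime `P` is prime because
`(R ⧸ P)[ℤ]` is a domain. Conversely a homogeneous ideal `Q` of `R[ℤ]` contains every monomial
`r T ^ n` of each of its elements; as `T ^ n` is a unit, `r` already lies in `Q ∩ R`, so `Q` is
extended from `Q ∩ R`.
-/

open AddMonoidAlgebra

namespace AddMonoidAlgebra

variable {R S G : Type*}

section CommSemiring

variable [CommSemiring R]

lemma coe_decompose_grade [AddMonoid G] [DecidableEq G] (x : R[G]) (g : G) :
    (DirectSum.decompose (grade R) x g : R[G]) = single g (x.coeff g) := by
  induction x using induction_linear with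
  | zero => simp
  | add x y hx hy => simp [hx, hy, single_add]
  | single h r =>
    rw [grade.decompose_single]
    by_cases hhg : h = g
    · subst hhg
      simp
    · rw [DirectSum.of_eq_of_ne _ _ _ (Ne.symm hhg)]
      simp [Finsupp.single_eq_of_ne' hhg]

lemma isHomogeneous_map_algebraMap [AddMonoid G] [DecidableEq G] (I : Ideal R) :
    (I.map (algebraMap R R[G])).IsHomogeneous (grade R) :=
  Ideal.homogeneous_span _ _ <| by
    rintro _ ⟨r, -, rfl⟩
    exact ⟨0, SetLike.algebraMap_mem_graded _ r⟩

lemma single_mem_iff_algebraMap_mem [AddGroup G] (I : Ideal R[G]) (g : G) (r : R) :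
    single g r ∈ I ↔ algebraMap R R[G] r ∈ I := by
  have hunit : IsUnit (single g (1 : R)) := by
    simpa using (Group.isUnit (Multiplicative.ofAdd g)).map (of R G)
  have hsingle : single g r = single g 1 * algebraMap R R[G] r := by simp [single_mul_single]
  rw [hsingle, I.unit_mul_mem_iff_mem hunit]

end CommSemiring

section CommRing

variable [CommRing R] [CommRing S]

lemma mem_map_algebraMap_of_forall_coeff_mem [AddMonoid G] {I : Ideal R} {x : R[G]}
    (hx : ∀ g, x.coeff g ∈ I) : x ∈ I.map (algebraMap R R[G]) := by
  rw [← sum_coeff_single x, Finsupp.sum]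
  refine Ideal.sum_mem _ fun g _ => ?_
  have hg : single g (1 : R) * algebraMap R R[G] (x.coeff g) = single g (x.coeff g) := by
    simp [single_mul_single]
  exact hg ▸ Ideal.mul_mem_left _ _ (Ideal.mem_map_of_mem _ (hx g))

variable (G) in
lemma ker_mapRingHom [AddMonoid G] (f : R →+* S) :
    RingHom.ker (mapRingHom G f) = (RingHom.ker f).map (algebraMap R R[G]) := by
  refine le_antisymm (fun x hx => mem_map_algebraMap_of_forall_coeff_mem fun g => ?_) ?_
  · simpa using congr_arg (coeff · g) hx
  · rw [Ideal.map_le_iff_le_comap]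
    intro r hr
    simp_all [coe_algebraMap]

lemma mem_map_algebraMap_iff [AddMonoid G] {I : Ideal R} {x : R[G]} :
    x ∈ I.map (algebraMap R R[G]) ↔ ∀ g, x.coeff g ∈ I := by
  rw [← Ideal.mk_ker (I := I), ← ker_mapRingHom, RingHom.mem_ker, ← coeff_inj]
  simp [Finsupp.ext_iff, Ideal.Quotient.eq_zero_iff_mem]

lemma comap_map_algebraMap [AddMonoid G] (I : Ideal R) :
    (I.map (algebraMap R R[G])).comap (algebraMap R R[G]) = I := by
  ext r
  refine ⟨fun h => by simpa [coe_algebraMap] using mem_map_algebraMap_iff.mp h 0, fun hr => ?_⟩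
  exact Ideal.mem_map_of_mem _ hr

lemma isPrime_map_algebraMap [AddMonoid G] [UniqueSums G] (P : Ideal R) [P.IsPrime] :
    (P.map (algebraMap R R[G])).IsPrime := by
  rw [← Ideal.mk_ker (I := P), ← ker_mapRingHom]
  exact RingHom.ker_isPrime _

lemma map_comap_algebraMap_of_isHomogeneous [AddGroup G] [DecidableEq G] {Q : Ideal R[G]}
    (hQ : Q.IsHomogeneous (grade R)) :
    (Q.comap (algebraMap R R[G])).map (algebraMap R R[G]) = Q := by
  ext x
  rw [mem_map_algebraMap_iff, hQ.mem_iff]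
  simp only [coe_decompose_grade, Ideal.mem_comap, single_mem_iff_algebraMap_mem]

end CommRing

end AddMonoidAlgebra

/-- For a commutative ring `R`, extension of ideals along
`R → R[T, T⁻¹]` (the Laurent polynomial ring, i.e. the monoid algebra `R[ℤ]` with its
natural ℤ-grading) gives a bijection between prime ideals of `R` and homogeneous prime
ideals of `R[T, T⁻¹]`, with inverse given by contraction; in particular every homogeneous
prime ideal of `R[T, T⁻¹]` is extended from (hence generated by) its degree-zero part. -/
theorem laurent_homogeneous_primes_bijection (R : Type*) [CommRing R] :
    Set.BijOn
        (fun P : Ideal R => Ideal.map (algebraMap R (AddMonoidAlgebra R ℤ)) P)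
        {P : Ideal R | P.IsPrime}
        {Q : Ideal (AddMonoidAlgebra R ℤ) |
          Q.IsPrime ∧ Ideal.IsHomogeneous (AddMonoidAlgebra.grade R (M := ℤ)) Q} ∧
      (∀ P : Ideal R, P.IsPrime →
        Ideal.comap (algebraMap R (AddMonoidAlgebra R ℤ))
          (Ideal.map (algebraMap R (AddMonoidAlgebra R ℤ)) P) = P) ∧
      (∀ Q : Ideal (AddMonoidAlgebra R ℤ), Q.IsPrime →
        Ideal.IsHomogeneous (AddMonoidAlgebra.grade R (M := ℤ)) Q →
          Ideal.map (algebraMap R (AddMonoidAlgebra R ℤ))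
            (Ideal.comap (algebraMap R (AddMonoidAlgebra R ℤ)) Q) = Q) := by
  have hinv : Set.InvOn (Ideal.comap (algebraMap R (AddMonoidAlgebra R ℤ)))
      (Ideal.map (algebraMap R (AddMonoidAlgebra R ℤ))) {P : Ideal R | P.IsPrime}
      {Q | Q.IsPrime ∧ Q.IsHomogeneous (grade R)} :=
    ⟨fun P _ => comap_map_algebraMap P, fun Q hQ => map_comap_algebraMap_of_isHomogeneous hQ.2⟩
  refine ⟨hinv.bijOn ?_ fun Q hQ => hQ.1.comap _, fun P _ => comap_map_algebraMap P,
    fun Q _ hQ => map_comap_algebraMap_of_isHomogeneous hQ⟩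
  intro P (_ : P.IsPrime)
  exact ⟨isPrime_map_algebraMap P, isHomogeneous_map_algebraMap P⟩
end
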